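/- Let Δ be a banner d-dimensional simplicial pseudomanifold, let x be a vertex, and let F be a facet of link_Δ(x). Let w be the unique vertex other than x with F ∪ {w} ∈ Δ. Then w is not adjacent to x in the 1-skeleton of Δ. -/

import Mathlib

open Finset

variable {V : Type*} [DecidableEq V]

/-- A (finite abstract) simplicial complex: a nonempty, downward closed family of finite
vertex sets (the empty face is always included). -/
def IsComplex (K : Set (Finset V)) : Prop :=
  K.Nonempty ∧ ∀ σ ∈ K, ∀ τ : Finset V, τ ⊆ σ → τ ∈ K

/-- A facet: a face maximal under inclusion. -/
def IsFacet (K : Set (Finset V)) (F : Finset V) : Prop :=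
  F ∈ K ∧ ∀ G ∈ K, F ⊆ G → G = F

/-- PureCplx of dimension `d`: every face is contained in a facet and all facets have `d+1` vertices. -/
def PureCplx (K : Set (Finset V)) (d : ℕ) : Prop :=
  (∀ σ ∈ K, ∃ F, IsFacet K F ∧ σ ⊆ F) ∧ ∀ F, IsFacet K F → F.card = d + 1

def IsVertex (K : Set (Finset V)) (x : V) : Prop := ({x} : Finset V) ∈ K

/-- The 1-skeleton graph of a complex (on the ambient vertex type). -/
def skeleton (K : Set (Finset V)) : SimpleGraph V where
  Adj x y := x ≠ y ∧ ({x, y} : Finset V) ∈ K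
  symm := by
    constructor
    intro x y h
    exact ⟨h.1.symm, by rw [Finset.pair_comm]; exact h.2⟩
  loopless := ⟨fun x h => h.1 rfl⟩

/-- A clique of the 1-skeleton of `K`. -/
def IsCliqueIn (K : Set (Finset V)) (T : Finset V) : Prop :=
  ∀ u ∈ T, ∀ v ∈ T, u ≠ v → ({u, v} : Finset V) ∈ K

/-- A critical clique: removing some vertex yields a face. -/
def IsCritical (K : Set (Finset V)) (T : Finset V) : Prop :=
  ∃ v ∈ T, T.erase v ∈ K

/-- `K` contains the boundary complex of a `(d+1)`-simplex as a subcomplex. -/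
def ContainsSimplexBoundary (K : Set (Finset V)) (d : ℕ) : Prop :=
  ∃ S : Finset V, S.card = d + 2 ∧ ∀ τ : Finset V, τ ⊆ S → τ ≠ S → τ ∈ K

/-- Banner (for a pure `d`-complex): every critical `(d+1)`-clique is spanning and no
boundary of a `(d+1)`-simplex occurs as a subcomplex. -/
def Banner (K : Set (Finset V)) (d : ℕ) : Prop :=
  (∀ T : Finset V, IsCliqueIn K T → T.card = d + 1 → IsCritical K T → T ∈ K) ∧
    ¬ ContainsSimplexBoundary K d

/-- Strongly banner: every `(d+1)`-clique is spanning and no boundary of a `(d+1)`-simplex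
occurs as a subcomplex. -/
def StronglyBanner (K : Set (Finset V)) (d : ℕ) : Prop :=
  (∀ T : Finset V, IsCliqueIn K T → T.card = d + 1 → T ∈ K) ∧
    ¬ ContainsSimplexBoundary K d

/-- FlagCplx: every clique of the 1-skeleton is a face. -/
def FlagCplx (K : Set (Finset V)) : Prop :=
  ∀ T : Finset V, IsCliqueIn K T → T ∈ K

/-- The link of a face `σ`. -/
def link (K : Set (Finset V)) (σ : Finset V) : Set (Finset V) :=
  {τ : Finset V | Disjoint τ σ ∧ τ ∪ σ ∈ K}

/-- The facet graph of a pure `d`-complex: facets adjacent when they share a `(d-1)`-face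
(i.e. their intersection has `d` vertices). -/
def facetGraph (K : Set (Finset V)) (d : ℕ) : SimpleGraph {F : Finset V // IsFacet K F} where
  Adj F G := F ≠ G ∧ ((F : Finset V) ∩ (G : Finset V)).card = d
  symm := by
    constructor
    intro F G h
    exact ⟨h.1.symm, by rw [Finset.inter_comm]; exact h.2⟩
  loopless := ⟨fun F h => h.1 rfl⟩

/-- Strong connectivity: the facet graph is connected. -/
def StronglyConnected (K : Set (Finset V)) (d : ℕ) : Prop :=
  (facetGraph K d).Connected

/-- A `d`-dimensional pseudomanifold: pure `d`-complex, every `(d-1)`-face is in exactly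
two facets, and the facet graph is connected. -/
def Pseudomanifold (K : Set (Finset V)) (d : ℕ) : Prop :=
  IsComplex K ∧ PureCplx K d ∧
    (∀ σ ∈ K, σ.card = d → {F : Finset V | IsFacet K F ∧ σ ⊆ F}.ncard = 2) ∧
    StronglyConnected K d

/-- Connectivity of a complex: the 1-skeleton induced on its vertex set is connected. -/
def ComplexConnected (K : Set (Finset V)) : Prop :=
  ((skeleton K).induce {x : V | IsVertex K x}).Connected

/-- A normal pseudomanifold: all links of faces of dimension at least one are connected. -/
def NormalPM (K : Set (Finset V)) (d : ℕ) : Prop :=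
  Pseudomanifold K d ∧ ∀ σ ∈ K, σ.card + 1 ≤ d → ComplexConnected (link K σ)

/-- The closed neighborhood `N(x)`: `x` together with its neighbors. -/
def closedNbhd (K : Set (Finset V)) (x : V) : Set V :=
  {x} ∪ {z : V | ({x, z} : Finset V) ∈ K}

/-- The subcomplex induced on a set `A` of vertices. -/
def inducedSub (K : Set (Finset V)) (A : Set V) : Set (Finset V) :=
  {σ ∈ K | ∀ v ∈ σ, v ∈ A}

/-- The antistar of a vertex: the induced subcomplex on all other vertices. -/
def antistar (K : Set (Finset V)) (x : V) : Set (Finset V) :=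
  {σ ∈ K | x ∉ σ}

/-- `K` is the boundary of a triangle, i.e. the 3-cycle `C₃`. -/
def IsC3 (K : Set (Finset V)) : Prop :=
  ∃ a b c : V, a ≠ b ∧ a ≠ c ∧ b ≠ c ∧
    K = {τ : Finset V | τ ⊆ ({a, b, c} : Finset V) ∧ τ ≠ ({a, b, c} : Finset V)}

/-- The banner number of a pure `d`-complex. -/
noncomputable def bannerNumber (K : Set (Finset V)) (d : ℕ) : ℕ :=
  sInf {j : ℕ | ∀ σ ∈ K, σ.card = j → Banner (link K σ) (d - j) ∨ IsC3 (link K σ)}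

/-- `k`-connectivity of a graph: more than `k` vertices, and removing fewer than `k`
vertices leaves it connected. -/
def KConnected {W : Type*} [Fintype W] [DecidableEq W] (G : SimpleGraph W) (k : ℕ) : Prop :=
  k < Fintype.card W ∧
    ∀ S : Finset W, S.card < k → (G.induce ((↑S : Set W)ᶜ)).Connected

/-- Existence of `k` pairwise independent `u`–`v` paths: paths sharing no vertices other
than `u` and `v`. -/
def IndepPaths {W : Type*} (G : SimpleGraph W) (u v : W) (k : ℕ) : Prop :=
  ∃ p : Fin k → G.Walk u v, (∀ i, (p i).IsPath) ∧
    ∀ i j, i ≠ j → ∀ w : W, w ∈ (p i).support → w ∈ (p j).support → w = u ∨ w = v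

/-!
Put `T = F ∪ {x, w}`, a set of `d + 2` vertices. If `x` and `w` were adjacent, `T` would be a
clique, and so would each `T \ {v}`. For `v ∈ F` the clique `T \ {v}` is critical, since
dropping `x` leaves a subset of the face `F ∪ {w}`; bannerness makes it a face. Together with
the faces `F ∪ {w}` and `F ∪ {x}`, the whole boundary of the simplex `T` then lies in `Δ`,
which bannerness forbids.
-/

section

variable {K : Set (Finset V)}

theorem IsComplex.isCliqueIn_of_mem (hK : IsComplex K) {σ : Finset V} (hσ : σ ∈ K) :
    IsCliqueIn K σ :=
  fun _ hu _ hv _ => hK.2 σ hσ _ (insert_subset hu (singleton_subset_iff.mpr hv))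

theorem IsCliqueIn.mono {S T : Finset V} (hT : IsCliqueIn K T) (hST : S ⊆ T) :
    IsCliqueIn K S :=
  fun u hu v hv => hT u (hST hu) v (hST hv)

theorem IsCliqueIn.insert {T : Finset V} {x : V} (hT : IsCliqueIn K T)
    (hx : ∀ v ∈ T, v ≠ x → ({x, v} : Finset V) ∈ K) : IsCliqueIn K (insert x T) := by
  intro u hu v hv huv
  rcases mem_insert.mp hu with rfl | huT
  · rcases mem_insert.mp hv with rfl | hvT
    · exact absurd rfl huv
    · exact hx v hvT huv.symm
  · rcases mem_insert.mp hv with rfl | hvT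
    · rw [pair_comm]; exact hx u huT huv
    · exact hT u huT v hvT huv

theorem IsComplex.containsSimplexBoundary_of_forall_erase_mem (hK : IsComplex K) {d : ℕ}
    {S : Finset V} (hS : S.card = d + 2) (herase : ∀ v ∈ S, S.erase v ∈ K) :
    ContainsSimplexBoundary K d := by
  refine ⟨S, hS, fun τ hτS hτ => ?_⟩
  obtain ⟨v, hvS, hvτ⟩ := not_subset.mp fun h => hτ (hτS.antisymm h)
  exact hK.2 _ (herase v hvS) τ (subset_erase.mpr ⟨hτS, hvτ⟩)

theorem Banner.erase_notMem_of_isCliqueIn (hK : IsComplex K) {d : ℕ} (hb : Banner K d)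
    {T : Finset V} (hT : IsCliqueIn K T) (hcard : T.card = d + 2) {x : V} (hxT : x ∈ T) :
    T.erase x ∉ K := by
  intro hx
  refine hb.2 (hK.containsSimplexBoundary_of_forall_erase_mem hcard fun v hvT => ?_)
  by_cases hvx : v = x
  · exact hvx ▸ hx
  refine hb.1 _ (hT.mono (erase_subset v T)) ?_ ⟨x, mem_erase.mpr ⟨Ne.symm hvx, hxT⟩, ?_⟩
  · rw [card_erase_of_mem hvT, hcard]; rfl
  · rw [erase_right_comm]
    exact hK.2 _ hx _ (erase_subset v _)

theorem isFacet_insert_of_isFacet_link {x : V} {F : Finset V} (hF : IsFacet (link K {x}) F) :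
    IsFacet K (insert x F) := by
  obtain ⟨⟨hdisj, hFx⟩, hFmax⟩ := hF
  have hxF : x ∉ F := disjoint_singleton_right.mp hdisj
  rw [union_comm, ← insert_eq] at hFx
  refine ⟨hFx, fun G hG hFG => ?_⟩
  have hxG : x ∈ G := hFG (mem_insert_self x F)
  have hGlink : G.erase x ∈ link K {x} := by
    refine ⟨disjoint_singleton_right.mpr (notMem_erase x G), ?_⟩
    rwa [union_comm, ← insert_eq, insert_erase hxG]
  have hFsub : F ⊆ G.erase x := by
    simpa [erase_eq_of_notMem hxF] using erase_subset_erase x hFG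
  rw [← insert_erase hxG, hFmax _ hGlink hFsub]

theorem PureCplx.card_of_isFacet_link {d : ℕ} (hpure : PureCplx K d) {x : V} {F : Finset V}
    (hF : IsFacet (link K {x}) F) : F.card = d := by
  have hxF : x ∉ F := disjoint_singleton_right.mp hF.1.1
  have := hpure.2 _ (isFacet_insert_of_isFacet_link hF)
  rw [card_insert_of_notMem hxF] at this
  omega

end

theorem second_cofacet_vertex_not_adjacent_general (K : Set (Finset V)) (d : ℕ)
    (hpm : Pseudomanifold K d) (hb : Banner K d)
    (x : V)
    (F : Finset V) (hF : IsFacet (link K {x}) F)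
    (w : V) (hwx : w ≠ x) (hwF : w ∉ F) (hFw : F ∪ {w} ∈ K) :
    ({x, w} : Finset V) ∉ K := by
  intro hxw
  obtain ⟨hK, hpure, -, -⟩ := hpm
  have hxF : x ∉ F := disjoint_singleton_right.mp hF.1.1
  rw [union_comm, ← insert_eq] at hFw
  have hxFw : x ∉ insert w F := by simp [hwx.symm, hxF]
  have hclique : IsCliqueIn K (insert x (insert w F)) := by
    refine (hK.isCliqueIn_of_mem hFw).insert fun v hv hvx => ?_
    rcases mem_insert.mp hv with rfl | hvF
    · exact hxw
    · exact hK.isCliqueIn_of_mem (isFacet_insert_of_isFacet_link hF).1 x (mem_insert_self x F)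
        v (mem_insert_of_mem hvF) hvx.symm
  have hcard : (insert x (insert w F)).card = d + 2 := by
    rw [card_insert_of_notMem hxFw, card_insert_of_notMem hwF, hpure.card_of_isFacet_link hF]
  exact hb.erase_notMem_of_isCliqueIn hK hclique hcard (mem_insert_self x _)
    (by rwa [erase_insert hxFw])

/-- In a banner pseudomanifold, if `F` is a facet of the link of `x` and `w` is the vertex
other than `x` with `F ∪ {w}` a face, then `w` is not adjacent to `x`. -/
theorem second_cofacet_vertex_not_adjacent (K : Set (Finset V)) (d : ℕ)
    (hpm : Pseudomanifold K d) (hb : Banner K d)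
    (x : V) (hx : IsVertex K x)
    (F : Finset V) (hF : IsFacet (link K {x}) F)
    (w : V) (hwx : w ≠ x) (hwF : w ∉ F) (hFw : F ∪ {w} ∈ K) :
    ({x, w} : Finset V) ∉ K :=
  second_cofacet_vertex_not_adjacent_general K d hpm hb x F hF w hwx hwF hFw
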